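/- Let T be a spherically homogeneous rooted tree and let G ≤ Aut(T) be a weakly branch group. Then for every vertex v of T and every k ∈ ℕ, the k-th iterated derived subgroup rist_G^{(k)}(v) of the rigid stabiliser rist_G(v) is nontrivial. -/

import Mathlib

open scoped Pointwise

/-! ## Spherically homogeneous rooted trees -/

/-- A vertex of the spherically homogeneous rooted tree over the shifted sequence of
alphabets `i ↦ A (i + k)`: a finite word whose `j`-th letter belongs to `A (j + k)`. -/
def Vtx (A : ℕ → Type*) (k : ℕ) : Type _ :=
  {l : List (Σ i, A i) // ∀ j (h : j < l.length), (l[j]'h).1 = j + k}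

namespace Vtx

variable {A : ℕ → Type*}

/-- The length of a vertex (the distance to the root). -/
def len {k : ℕ} (v : Vtx A k) : ℕ := v.1.length

/-- The prefix relation on vertices. -/
def Pre {k : ℕ} (v w : Vtx A k) : Prop := v.1 <+: w.1

/-- The `n`-th level of the tree: all vertices of length `n`. -/
def level (A : ℕ → Type*) (k : ℕ) (n : ℕ) : Set (Vtx A k) := {v | v.len = n}

/-- Concatenation of a vertex of the tree with a word over the shifted alphabets. -/
def cat (v : Vtx A 0) (w : Vtx A v.len) : Vtx A 0 :=
  ⟨v.1 ++ w.1, by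
    intro j h
    by_cases hj : j < v.1.length
    · rw [List.getElem_append_left hj]
      exact v.2 j hj
    · push_neg at hj
      rw [List.getElem_append_right hj]
      have h2 : j - v.1.length < w.1.length := by
        have h3 := h
        simp only [List.length_append] at h3
        omega
      exact (w.2 (j - v.1.length) h2).trans
        (by show j - v.1.length + v.1.length = j + 0; omega)⟩

/-- Deleting a prefix of length `n` from a vertex. -/
def dropPre (n : ℕ) (u : Vtx A 0) : Vtx A n :=
  ⟨u.1.drop n, by
    intro j h
    have h' : n + j < u.1.length := by
      simp only [List.length_drop] at h
      omega
    rw [List.getElem_drop]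
    exact (u.2 (n + j) h').trans (by omega)⟩

end Vtx

/-- The full automorphism group of the rooted tree `T_k`:
bijections of the vertex set preserving word length and the prefix relation. -/
def treeAut (A : ℕ → Type*) (k : ℕ) : Subgroup (Equiv.Perm (Vtx A k)) where
  carrier := {f | (∀ v, (f v).len = v.len) ∧ ∀ v w, Vtx.Pre (f v) (f w) ↔ Vtx.Pre v w}
  one_mem' := ⟨fun _ => rfl, fun _ _ => Iff.rfl⟩
  mul_mem' := by
    rintro f g ⟨hf1, hf2⟩ ⟨hg1, hg2⟩
    constructor
    · intro v
      have : (f * g) v = f (g v) := rfl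
      rw [this]
      exact (hf1 (g v)).trans (hg1 v)
    · intro v w
      have e1 : (f * g) v = f (g v) := rfl
      have e2 : (f * g) w = f (g w) := rfl
      rw [e1, e2]
      exact (hf2 (g v) (g w)).trans (hg2 v w)
  inv_mem' := by
    rintro f ⟨hf1, hf2⟩
    constructor
    · intro v
      conv_rhs => rw [← (show f (f⁻¹ v) = v by simp)]
      exact (hf1 _).symm
    · intro v w
      conv_rhs => rw [← (show f (f⁻¹ v) = v by simp), ← (show f (f⁻¹ w) = w by simp)]
      exact (hf2 _ _).symm

variable {A : ℕ → Type*}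

/-- The stabiliser `St_H(v)` of a vertex `v` in a subgroup `H ≤ Perm`. -/
def vstab {k : ℕ} (H : Subgroup (Equiv.Perm (Vtx A k))) (v : Vtx A k) :
    Subgroup (Equiv.Perm (Vtx A k)) where
  carrier := {g | g ∈ H ∧ g v = v}
  one_mem' := ⟨H.one_mem, rfl⟩
  mul_mem' := by
    rintro a b ⟨ha, ha'⟩ ⟨hb, hb'⟩
    refine ⟨H.mul_mem ha hb, ?_⟩
    have : (a * b) v = a (b v) := rfl
    rw [this, hb', ha']
  inv_mem' := by
    rintro a ⟨ha, ha'⟩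
    refine ⟨H.inv_mem ha, ?_⟩
    conv_lhs => rw [← ha']
    exact (show a⁻¹ (a v) = v by simp)

/-- The stabiliser `St_H(n)` of the `n`-th level. -/
def levStab {k : ℕ} (H : Subgroup (Equiv.Perm (Vtx A k))) (n : ℕ) :
    Subgroup (Equiv.Perm (Vtx A k)) where
  carrier := {g | g ∈ H ∧ ∀ v : Vtx A k, v.len = n → g v = v}
  one_mem' := ⟨H.one_mem, fun _ _ => rfl⟩
  mul_mem' := by
    rintro a b ⟨ha, ha'⟩ ⟨hb, hb'⟩
    refine ⟨H.mul_mem ha hb, fun v hv => ?_⟩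
    have : (a * b) v = a (b v) := rfl
    rw [this, hb' v hv, ha' v hv]
  inv_mem' := by
    rintro a ⟨ha, ha'⟩
    refine ⟨H.inv_mem ha, fun v hv => ?_⟩
    conv_lhs => rw [← ha' v hv]
    exact (show a⁻¹ (a v) = v by simp)

/-- The rigid stabiliser `rist_H(v)`: elements of `H` fixing every vertex that does not
have `v` as a prefix. -/
def rist {k : ℕ} (H : Subgroup (Equiv.Perm (Vtx A k))) (v : Vtx A k) :
    Subgroup (Equiv.Perm (Vtx A k)) where
  carrier := {g | g ∈ H ∧ ∀ w : Vtx A k, ¬ Vtx.Pre v w → g w = w}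
  one_mem' := ⟨H.one_mem, fun _ _ => rfl⟩
  mul_mem' := by
    rintro a b ⟨ha, ha'⟩ ⟨hb, hb'⟩
    refine ⟨H.mul_mem ha hb, fun w hw => ?_⟩
    have : (a * b) w = a (b w) := rfl
    rw [this, hb' w hw, ha' w hw]
  inv_mem' := by
    rintro a ⟨ha, ha'⟩
    refine ⟨H.inv_mem ha, fun w hw => ?_⟩
    conv_lhs => rw [← ha' w hw]
    exact (show a⁻¹ (a w) = w by simp)

/-- The rigid level stabiliser `rist_H(n)`: the subgroup generated by the rigid
stabilisers of the vertices on the `n`-th level. -/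
def ristLev {k : ℕ} (H : Subgroup (Equiv.Perm (Vtx A k))) (n : ℕ) :
    Subgroup (Equiv.Perm (Vtx A k)) :=
  ⨆ v ∈ {v : Vtx A k | v.len = n}, rist H v

/-- `G` acts spherically transitively: transitively on every level of the tree. -/
def SphTrans {k : ℕ} (G : Subgroup (Equiv.Perm (Vtx A k))) : Prop :=
  ∀ v w : Vtx A k, v.len = w.len → ∃ g ∈ G, g v = w

/-- `G ≤ Aut(T_k)` is a branch group. -/
structure IsBranch {k : ℕ} (G : Subgroup (Equiv.Perm (Vtx A k))) : Prop where
  le_aut : G ≤ treeAut A k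
  trans : SphTrans G
  rist_fi : ∀ n : ℕ, (ristLev G n).relIndex G ≠ 0

/-- `G ≤ Aut(T_k)` is a weakly branch group. -/
structure IsWeaklyBranch {k : ℕ} (G : Subgroup (Equiv.Perm (Vtx A k))) : Prop where
  le_aut : G ≤ treeAut A k
  trans : SphTrans G
  rist_nt : ∀ n : ℕ, ristLev G n ≠ ⊥

/-! ## Sections -/

namespace Vtx

theorem dropPre_cat (v : Vtx A 0) (w : Vtx A v.len) : dropPre v.len (cat v w) = w := by
  apply Subtype.ext
  show (v.1 ++ w.1).drop v.1.length = w.1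
  exact List.drop_left

theorem pre_cat (v : Vtx A 0) (w : Vtx A v.len) : Pre v (cat v w) := ⟨w.1, rfl⟩

theorem cat_dropPre {v u : Vtx A 0} (h : Pre v u) : cat v (dropPre v.len u) = u := by
  apply Subtype.ext
  show v.1 ++ u.1.drop v.1.length = u.1
  obtain ⟨t, ht⟩ := h
  rw [← ht, List.drop_left]

end Vtx

/-- The section map `φ_v` at the level of plain functions. -/
def secFun (v : Vtx A 0) (f : Equiv.Perm (Vtx A 0)) : Vtx A v.len → Vtx A v.len :=
  fun w => Vtx.dropPre v.len (f (Vtx.cat v w))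

theorem secFun_key {v : Vtx A 0} {f : Equiv.Perm (Vtx A 0)}
    (hf : f ∈ vstab (treeAut A 0) v) (w : Vtx A v.len) :
    Vtx.cat v (secFun v f w) = f (Vtx.cat v w) := by
  obtain ⟨⟨hlen, hpre⟩, hfix⟩ := hf
  apply Vtx.cat_dropPre
  have := (hpre v (Vtx.cat v w))
  rw [hfix] at this
  exact this.mpr (Vtx.pre_cat v w)

theorem secFun_mul {v : Vtx A 0} {f g : Equiv.Perm (Vtx A 0)}
    (hf : f ∈ vstab (treeAut A 0) v) (hg : g ∈ vstab (treeAut A 0) v) :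
    secFun v (f * g) = secFun v f ∘ secFun v g := by
  funext w
  show Vtx.dropPre v.len ((f * g) (Vtx.cat v w)) = Vtx.dropPre v.len (f (Vtx.cat v (secFun v g w)))
  rw [secFun_key hg w]
  rfl

theorem secFun_one (v : Vtx A 0) : secFun v (1 : Equiv.Perm (Vtx A 0)) = id := by
  funext w
  show Vtx.dropPre v.len ((1 : Equiv.Perm (Vtx A 0)) (Vtx.cat v w)) = w
  rw [Equiv.Perm.one_apply]
  exact Vtx.dropPre_cat v w

theorem secFun_bij {v : Vtx A 0} {f : Equiv.Perm (Vtx A 0)}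
    (hf : f ∈ vstab (treeAut A 0) v) : Function.Bijective (secFun v f) := by
  rw [Function.bijective_iff_has_inverse]
  refine ⟨secFun v f⁻¹, fun w => ?_, fun w => ?_⟩
  · have h1 := congrFun (secFun_mul (inv_mem hf) hf) w
    rw [inv_mul_cancel, secFun_one] at h1
    exact h1.symm
  · have h1 := congrFun (secFun_mul hf (inv_mem hf)) w
    rw [mul_inv_cancel, secFun_one] at h1
    exact h1.symm

open Classical in
noncomputable def secPerm (v : Vtx A 0) (f : Equiv.Perm (Vtx A 0)) :
    Equiv.Perm (Vtx A v.len) :=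
  if h : Function.Bijective (secFun v f) then Equiv.ofBijective _ h else 1

theorem secPerm_coe {v : Vtx A 0} {f : Equiv.Perm (Vtx A 0)}
    (hf : f ∈ vstab (treeAut A 0) v) : ⇑(secPerm v f) = secFun v f := by
  unfold secPerm
  rw [dif_pos (secFun_bij hf)]
  rfl

/-- The section homomorphism `φ_v : St_{Aut(T)}(v) → Perm(T_{|v|})`. -/
noncomputable def phiHom (v : Vtx A 0) :
    ↥(vstab (treeAut A 0) v) →* Equiv.Perm (Vtx A v.len) where
  toFun f := secPerm v f.1
  map_one' := by
    apply Equiv.ext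
    intro w
    show secPerm v (1 : Equiv.Perm (Vtx A 0)) w = (1 : Equiv.Perm (Vtx A v.len)) w
    rw [secPerm_coe (one_mem (vstab (treeAut A 0) v)), secFun_one]
    rfl
  map_mul' := by
    intro f g
    apply Equiv.ext
    intro w
    show secPerm v (f.1 * g.1) w = (secPerm v f.1 * secPerm v g.1) w
    have e : (secPerm v f.1 * secPerm v g.1) w = secPerm v f.1 (secPerm v g.1 w) := rfl
    rw [e, secPerm_coe (mul_mem f.2 g.2), secPerm_coe f.2, secPerm_coe g.2,
      secFun_mul f.2 g.2]
    rfl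

/-- The image `φ_v(St_H(v)) ≤ Perm(T_{|v|})` of the stabiliser of `v` in `H` under the
section homomorphism at `v`; for `H ≤ G ≤ Aut(T)` this is the subgroup written `H_v`. -/
noncomputable def secSub (v : Vtx A 0) (H : Subgroup (Equiv.Perm (Vtx A 0))) :
    Subgroup (Equiv.Perm (Vtx A v.len)) :=
  Subgroup.map (phiHom v) ((vstab H v).subgroupOf (vstab (treeAut A 0) v))

/-- A subgroup `H ≤ G` has finite bi-index if the set of double cosets
`{HgH : g ∈ G}` is finite. -/
def FiniteBiIndex {G : Type*} [Group G] (H : Subgroup G) : Prop :=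
  {S : Set G | ∃ g : G, S = (H : Set G) * {g} * (H : Set G)}.Finite

/-- The set of double cosets of a subgroup `H` of a group `M` with representatives in a
subgroup `G` of `M`; for `H ≤ G` this is the set of double cosets `H\G/H`. -/
def doubleCosets {M : Type*} [Group M] (G H : Subgroup M) : Set (Set M) :=
  {S : Set M | ∃ g ∈ G, S = (H : Set M) * {g} * (H : Set M)}

/-- The pro-normal closure of a subgroup `H ≤ G`: the intersection of the subsets `HN`,
over all nontrivial normal subgroups `N` of `G`. -/
def pronormalClosure {G : Type*} [Group G] (H : Subgroup G) : Subgroup G where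
  carrier := ⋂ N ∈ {N : Subgroup G | N.Normal ∧ N ≠ ⊥}, (H : Set G) * (N : Set G)
  one_mem' := by
    simp only [Set.mem_iInter]
    rintro N ⟨hN, -⟩
    exact ⟨1, H.one_mem, 1, N.one_mem, mul_one 1⟩
  mul_mem' := by
    intro a b ha hb
    simp only [Set.mem_iInter] at ha hb ⊢
    rintro N hN
    obtain ⟨h₁, hh₁, n₁, hn₁, rfl⟩ := ha N hN
    obtain ⟨h₂, hh₂, n₂, hn₂, rfl⟩ := hb N hN
    refine ⟨h₁ * h₂, H.mul_mem hh₁ hh₂, (h₂⁻¹ * n₁ * h₂) * n₂, ?_, by group⟩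
    refine N.mul_mem ?_ hn₂
    have := hN.1.conj_mem n₁ hn₁ h₂⁻¹
    simpa using this
  inv_mem' := by
    intro a ha
    simp only [Set.mem_iInter] at ha ⊢
    rintro N hN
    obtain ⟨h, hh, n, hn, rfl⟩ := ha N hN
    refine ⟨h⁻¹, H.inv_mem hh, h * n⁻¹ * h⁻¹, hN.1.conj_mem n⁻¹ (N.inv_mem hn) h, by group⟩

/-- A subgroup `H ≤ G` is quasi-prodense if its pro-normal closure has finite index. -/
def QuasiProdense {G : Type*} [Group G] (H : Subgroup G) : Prop :=
  (pronormalClosure H).index ≠ 0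

/-- `K` is a normal subgroup of the subgroup `H` (both subgroups of an ambient group). -/
def NormalIn {M : Type*} [Group M] (H K : Subgroup M) : Prop :=
  K ≤ H ∧ ∀ h ∈ H, ∀ k ∈ K, h * k * h⁻¹ ∈ K

/-- `K` is a subnormal subgroup of the subgroup `H`. -/
def SubnormalIn {M : Type*} [Group M] (H K : Subgroup M) : Prop :=
  ∃ (m : ℕ) (c : ℕ → Subgroup M), c 0 = K ∧ c m = H ∧ ∀ i < m, NormalIn (c (i + 1)) (c i)

/-- The iterated derived subgroups of a subgroup. -/
def iterDerived {M : Type*} [Group M] (H : Subgroup M) : ℕ → Subgroup M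
  | 0 => H
  | (k + 1) => ⁅iterDerived H k, iterDerived H k⁆

/-! Induction on `k`. A nontrivial `g ∈ rist^{(k)}(v)` moves some vertex `u` below `v`, and
`rist^{(k)}(u) ≤ rist^{(k)}(v)` contains some `h ≠ 1` by the induction hypothesis. Since `u` and
`g u` are distinct vertices of the same level, `h` and `g h g⁻¹` have disjoint supports, so they
cannot coincide and `⁅g, h⁆ ∈ rist^{(k+1)}(v)` is nontrivial. The base case holds because
conjugation by `G` moves rigid stabilisers around a level transitively, and one of them is
nontrivial. -/

open scoped commutatorElement

lemma iterDerived_le_self {M : Type*} [Group M] (H : Subgroup M) : ∀ n, iterDerived H n ≤ H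
  | 0 => le_rfl
  | n + 1 => (Subgroup.commutator_le_self _).trans (iterDerived_le_self H n)

lemma iterDerived_mono {M : Type*} [Group M] {H K : Subgroup M} (h : H ≤ K) :
    ∀ n, iterDerived H n ≤ iterDerived K n
  | 0 => h
  | n + 1 => Subgroup.commutator_mono (iterDerived_mono h n) (iterDerived_mono h n)

variable {k : ℕ}

lemma Vtx.not_pre_or_not_pre_of_len_eq {u w : Vtx A k} (hlen : u.len = w.len) (hne : u ≠ w)
    (x : Vtx A k) : ¬ Vtx.Pre u x ∨ ¬ Vtx.Pre w x := by
  by_contra! h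
  exact hne (Subtype.ext ((List.prefix_of_prefix_length_le h.1 h.2 hlen.le).eq_of_length hlen))

lemma rist_anti {H : Subgroup (Equiv.Perm (Vtx A k))} {u v : Vtx A k} (h : Vtx.Pre v u) :
    rist H u ≤ rist H v :=
  fun _ hg => ⟨hg.1, fun w hw => hg.2 w fun hu => hw (h.trans hu)⟩

lemma exists_pre_apply_ne_of_mem_rist {H : Subgroup (Equiv.Perm (Vtx A k))} {v : Vtx A k}
    {g : Equiv.Perm (Vtx A k)} (hg : g ∈ rist H v) (hne : g ≠ 1) :
    ∃ u, Vtx.Pre v u ∧ g u ≠ u := by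
  obtain ⟨u, hu⟩ : ∃ u, g u ≠ u := by
    by_contra! h
    exact hne (Equiv.ext h)
  exact ⟨u, by_contra fun hvu => hu (hg.2 u hvu), hu⟩

lemma eq_one_of_mem_rist_of_mem_rist {H : Subgroup (Equiv.Perm (Vtx A k))} {u w : Vtx A k}
    (hlen : u.len = w.len) (hne : u ≠ w) {h : Equiv.Perm (Vtx A k)} (hu : h ∈ rist H u)
    (hw : h ∈ rist H w) : h = 1 := by
  refine Equiv.ext fun x => ?_
  rcases Vtx.not_pre_or_not_pre_of_len_eq hlen hne x with hx | hx
  exacts [hu.2 x hx, hw.2 x hx]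

lemma conj_mem_rist {G : Subgroup (Equiv.Perm (Vtx A k))} (hG : G ≤ treeAut A k)
    {g h : Equiv.Perm (Vtx A k)} (hg : g ∈ G) {w : Vtx A k} (hh : h ∈ rist G w) :
    g * h * g⁻¹ ∈ rist G (g w) := by
  refine ⟨G.mul_mem (G.mul_mem hg hh.1) (G.inv_mem hg), fun x hx => ?_⟩
  have hfix : h (g⁻¹ x) = g⁻¹ x := hh.2 _ fun hwx => hx <| by
    simpa using ((hG hg).2 w (g⁻¹ x)).mpr hwx
  rw [Equiv.Perm.mul_apply, Equiv.Perm.mul_apply, hfix]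
  exact g.apply_symm_apply x

lemma IsWeaklyBranch.rist_ne_bot {G : Subgroup (Equiv.Perm (Vtx A k))} (hG : IsWeaklyBranch G)
    (v : Vtx A k) : rist G v ≠ ⊥ := by
  obtain ⟨w, hwv, hw⟩ : ∃ w : Vtx A k, w.len = v.len ∧ rist G w ≠ ⊥ := by
    by_contra! h
    exact hG.rist_nt v.len (iSup₂_eq_bot.mpr h)
  obtain ⟨h, hh, hh1⟩ := (rist G w).bot_or_exists_ne_one.resolve_left hw
  obtain ⟨g, hg, rfl⟩ := hG.trans w v hwv
  refine fun hbot => hh1 ?_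
  have := (Subgroup.eq_bot_iff_forall _).mp hbot _ (conj_mem_rist hG.le_aut hg hh)
  simpa [mul_inv_eq_one, mul_eq_right] using this

lemma commutator_ne_one_of_mem_rist {G : Subgroup (Equiv.Perm (Vtx A k))}
    (hG : G ≤ treeAut A k) {g h : Equiv.Perm (Vtx A k)} (hg : g ∈ G) {u : Vtx A k}
    (hgu : g u ≠ u) (hh : h ∈ rist G u) (hne : h ≠ 1) : ⁅g, h⁆ ≠ 1 := by
  intro hc
  have hconj : g * h * g⁻¹ = h := by
    rw [commutatorElement_eq_one_iff_mul_comm] at hc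
    rw [hc, mul_inv_cancel_right]
  exact hne <| eq_one_of_mem_rist_of_mem_rist ((hG hg).1 u) hgu
    (hconj ▸ conj_mem_rist hG hg hh) hh

theorem iterDerived_rist_ne_bot_general
    (A : ℕ → Type*)
    (G : Subgroup (Equiv.Perm (Vtx A 0))) (hG : IsWeaklyBranch G)
    (v : Vtx A 0) (k : ℕ) :
    iterDerived (rist G v) k ≠ ⊥ := by
  induction k generalizing v with
  | zero => exact hG.rist_ne_bot v
  | succ k ih =>
    obtain ⟨g, hgD, hg1⟩ := (iterDerived (rist G v) k).bot_or_exists_ne_one.resolve_left (ih v)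
    have hgR := iterDerived_le_self _ k hgD
    obtain ⟨u, hvu, hgu⟩ := exists_pre_apply_ne_of_mem_rist hgR hg1
    obtain ⟨h, hhD, hh1⟩ := (iterDerived (rist G u) k).bot_or_exists_ne_one.resolve_left (ih u)
    have hcomm : ⁅g, h⁆ ∈ iterDerived (rist G v) (k + 1) :=
      Subgroup.commutator_mem_commutator hgD (iterDerived_mono (rist_anti hvu) k hhD)
    exact fun hbot => commutator_ne_one_of_mem_rist hG.le_aut hgR.1 hgu
      (iterDerived_le_self _ k hhD) hh1 ((Subgroup.eq_bot_iff_forall _).mp hbot _ hcomm)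

/-- In a weakly branch group, every iterated derived subgroup of every rigid vertex
stabiliser is nontrivial. -/
theorem iterDerived_rist_ne_bot
    (A : ℕ → Type*) [∀ i, Fintype (A i)] (hA : ∀ i, 2 ≤ Fintype.card (A i))
    (G : Subgroup (Equiv.Perm (Vtx A 0))) (hG : IsWeaklyBranch G)
    (v : Vtx A 0) (k : ℕ) :
    iterDerived (rist G v) k ≠ ⊥ :=
  iterDerived_rist_ne_bot_general A G hG v k
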